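/- arXiv:1107.0346 — 4 statements merged into one kernel-verified Lean document; each statement's English description precedes it below -/
import Mathlib

section
/- Let V be a finite-dimensional vector space over ℝ or ℂ with a hermitian form such that V is nondegenerate, and let W be a nondegenerate proper subspace of V. Then there exists a nondegenerate subspace W' with W ≤ W' ≤ V and dim W' = dim W + 1. -/
variable {𝕜 : Type*} [RCLike 𝕜] {V : Type*} [AddCommGroup V] [Module 𝕜 V]

/-- Orthogonal complement of a subspace with respect to a sesquilinear form
(linear in the first argument, conjugate-linear in the second). -/
def sperp (B : V →ₗ[𝕜] V →ₗ⋆[𝕜] 𝕜) (W : Submodule 𝕜 V) : Submodule 𝕜 V where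
  carrier := {v | ∀ w ∈ W, B v w = 0}
  zero_mem' := by intro w hw; simp
  add_mem' := by
    intro a b ha hb w hw
    simp only [Set.mem_setOf_eq] at ha hb
    simp [map_add, ha w hw, hb w hw]
  smul_mem' := by
    intro c a ha w hw
    simp only [Set.mem_setOf_eq] at ha
    simp [map_smul, ha w hw]

/-!
Since `W` is nondegenerate, a dimension count gives `V = W ⊕ W^⊥`, and then `W^⊥` is
nondegenerate because `V` is; it is nonzero because `W` is proper. By polarization, a nonzero
nondegenerate hermitian space contains an anisotropic vector `v`, and `W ⊕ 𝕜 v` is the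
required nondegenerate subspace.
-/

lemma finrank_map_le_of_semilinear {E F : Type*} [AddCommGroup E] [Module 𝕜 E] [AddCommGroup F]
    [Module 𝕜 F] (f : E →ₗ⋆[𝕜] F) (W : Submodule 𝕜 E) [FiniteDimensional 𝕜 W] :
    Module.finrank 𝕜 (W.map f) ≤ Module.finrank 𝕜 W := by
  let b := Module.finBasis 𝕜 W
  have hspan : W.map f = Submodule.span 𝕜 (Set.range (f ∘ W.subtype ∘ b)) := by
    rw [Set.range_comp, ← Submodule.map_span, Set.range_comp, ← Submodule.map_span, b.span_eq,
      Submodule.map_subtype_top]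
  rw [hspan]
  exact (finrank_range_le_card _).trans (by simp)

section

variable (B : V →ₗ[𝕜] V →ₗ⋆[𝕜] 𝕜)

lemma sperp_eq_dualCoannihilator (W : Submodule 𝕜 V) :
    sperp B W = (W.map B.flip).dualCoannihilator := by
  ext v
  simp [sperp]

lemma sperp_sup (W U : Submodule 𝕜 V) : sperp B (W ⊔ U) = sperp B W ⊓ sperp B U := by
  simp only [sperp_eq_dualCoannihilator, Submodule.map_sup, Submodule.dualCoannihilator_sup_eq]

lemma finrank_le_finrank_add_finrank_sperp [FiniteDimensional 𝕜 V] (W : Submodule 𝕜 V) :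
    Module.finrank 𝕜 V ≤ Module.finrank 𝕜 W + Module.finrank 𝕜 (sperp B W) := by
  rw [← Subspace.finrank_add_finrank_dualCoannihilator_eq (W.map B.flip),
    sperp_eq_dualCoannihilator]
  exact Nat.add_le_add_right (finrank_map_le_of_semilinear B.flip W) _

lemma isCompl_sperp [FiniteDimensional 𝕜 V] {W : Submodule 𝕜 V} (hW : W ⊓ sperp B W = ⊥) :
    IsCompl W (sperp B W) := by
  refine ⟨disjoint_iff.mpr hW, codisjoint_iff.mpr (Submodule.eq_top_of_finrank_eq ?_)⟩
  have := Submodule.finrank_sup_add_finrank_inf_eq W (sperp B W)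
  rw [hW, finrank_bot, add_zero] at this
  have := finrank_le_finrank_add_finrank_sperp B W
  have := Submodule.finrank_le (W ⊔ sperp B W)
  omega

lemma sperp_inf_sperp_sperp_eq_bot [FiniteDimensional 𝕜 V] (hV : sperp B ⊤ = ⊥)
    {W : Submodule 𝕜 V} (hW : W ⊓ sperp B W = ⊥) :
    sperp B W ⊓ sperp B (sperp B W) = ⊥ := by
  rw [← sperp_sup, (isCompl_sperp B hW).sup_eq_top, hV]

lemma notMem_of_mem_sperp {W : Submodule 𝕜 V} (hW : W ⊓ sperp B W = ⊥) {v : V}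
    (hv : v ∈ sperp B W) (hvv : B v v ≠ 0) : v ∉ W := by
  intro hvW
  have hv0 : v ∈ W ⊓ sperp B W := ⟨hvW, hv⟩
  rw [hW, Submodule.mem_bot] at hv0
  simp [hv0] at hvv

end

lemma apply_eq_zero_of_apply_self_eq_zero {B : V →ₗ[𝕜] V →ₗ⋆[𝕜] 𝕜}
    (hB : ∀ x y, B x y = starRingEnd 𝕜 (B y x)) {S : Submodule 𝕜 V}
    (h : ∀ x ∈ S, B x x = 0) : ∀ x ∈ S, ∀ y ∈ S, B x y = 0 := by
  -- Expanding `B (x + y) (x + y)` gives `re (B x y) = 0`; for `y := B x y • y` this is `‖B x y‖²`.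
  have hre : ∀ x ∈ S, ∀ y ∈ S, RCLike.re (B x y) = 0 := by
    intro x hx y hy
    have hxy : B x y + starRingEnd 𝕜 (B x y) = 0 := by
      simpa [h x hx, h y hy, ← hB] using h _ (S.add_mem hx hy)
    simpa [RCLike.add_conj] using hxy
  intro x hx y hy
  simpa [RCLike.conj_mul] using hre x hx _ (S.smul_mem (B x y) hy)

lemma exists_apply_self_ne_zero {B : V →ₗ[𝕜] V →ₗ⋆[𝕜] 𝕜}
    (hB : ∀ x y, B x y = starRingEnd 𝕜 (B y x)) {S : Submodule 𝕜 V}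
    (hS : S ⊓ sperp B S = ⊥) (hS_ne : S ≠ ⊥) : ∃ v ∈ S, B v v ≠ 0 := by
  by_contra! h
  obtain ⟨u, hu, hu_ne⟩ := Submodule.exists_mem_ne_zero_of_ne_bot hS_ne
  have hu_perp : u ∈ S ⊓ sperp B S :=
    ⟨hu, fun s hs => apply_eq_zero_of_apply_self_eq_zero hB h u hu s hs⟩
  exact hu_ne (by simpa [hS] using hu_perp)

lemma sup_span_singleton_inf_sperp_eq_bot {B : V →ₗ[𝕜] V →ₗ⋆[𝕜] 𝕜}
    (hB : ∀ x y, B x y = starRingEnd 𝕜 (B y x)) {W : Submodule 𝕜 V} (hW : W ⊓ sperp B W = ⊥)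
    {v : V} (hv : v ∈ sperp B W) (hvv : B v v ≠ 0) :
    (W ⊔ 𝕜 ∙ v) ⊓ sperp B (W ⊔ 𝕜 ∙ v) = ⊥ := by
  rw [eq_bot_iff]
  rintro x ⟨hx, hx_perp⟩
  obtain ⟨w, hw, _, hs, rfl⟩ := Submodule.mem_sup.mp hx
  obtain ⟨c, rfl⟩ := Submodule.mem_span_singleton.mp hs
  have hwv : B w v = 0 := by rw [hB, hv w hw, map_zero]
  have hc : c = 0 := by
    have := hx_perp v (Submodule.mem_sup_right (Submodule.mem_span_singleton_self v))
    simpa [hwv, hvv] using this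
  subst hc
  rw [zero_smul, add_zero, sperp_sup] at hx_perp
  rw [zero_smul, add_zero, ← hW]
  exact ⟨hw, hx_perp.1⟩

/-- If `V` is nondegenerate and `W` is a nondegenerate proper subspace, then
there is a nondegenerate subspace `W'` with `W ≤ W'` and `dim W' = dim W + 1`. -/
theorem stmt_7 [FiniteDimensional 𝕜 V] (B : V →ₗ[𝕜] V →ₗ⋆[𝕜] 𝕜)
    (hB : ∀ x y, B x y = starRingEnd 𝕜 (B y x))
    (hV : sperp B ⊤ = ⊥) (W : Submodule 𝕜 V) (hW : W ⊓ sperp B W = ⊥)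
    (hproper : W ≠ ⊤) :
    ∃ W' : Submodule 𝕜 V, W ≤ W' ∧ W' ⊓ sperp B W' = ⊥ ∧
      Module.finrank 𝕜 W' = Module.finrank 𝕜 W + 1 := by
  have hcompl := isCompl_sperp B hW
  have hperp_ne : sperp B W ≠ ⊥ := fun h => hproper (by simpa [h] using hcompl.sup_eq_top)
  obtain ⟨v, hv, hvv⟩ :=
    exists_apply_self_ne_zero hB (sperp_inf_sperp_sperp_eq_bot B hV hW) hperp_ne
  exact ⟨W ⊔ 𝕜 ∙ v, le_sup_left, sup_span_singleton_inf_sperp_eq_bot hB hW hv hvv,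
    Submodule.finrank_sup_span_singleton (notMem_of_mem_sperp B hW hv hvv)⟩
end

section
/- (Sylvester's law of inertia for hermitian forms) Let V be a finite-dimensional vector space over ℝ or ℂ with a hermitian form, and let β and β' be two orthonormal bases of V (bases with ⟨bᵢ,bⱼ⟩ = 0 for i ≠ j and ⟨bᵢ,bᵢ⟩ ∈ {-1,0,1}). Then the number of basis vectors with ⟨b,b⟩ = -1, the number with ⟨b,b⟩ = 0, and the number with ⟨b,b⟩ = +1 are the same for β and β'. -/
/-!
Expanding in an orthogonal basis gives `re ⟪x, x⟫ = ∑ |xᵢ|² re ⟪bᵢ, bᵢ⟫`, so `re ⟪x, x⟫` is positive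
on the nonzero vectors of the span of the basis vectors of positive self-product, and
nonpositive on the span of the remaining basis vectors of any other orthogonal basis. These two
subspaces therefore meet only in `0`, which bounds the positive count of the first basis by
the positive count of the second. By symmetry, and applied to `-B`, the positive and negative
counts agree; the zero counts then agree because both bases have `finrank V` elements.
-/

open Module Submodule RCLike

theorem Nat.card_subtype_add_card_subtype_not {α : Type*} [Finite α] (p : α → Prop) :
    Nat.card {a // p a} + Nat.card {a // ¬p a} = Nat.card α := by
  have := Fintype.ofFinite α
  classical
  simp only [Nat.card_eq_fintype_card, Fintype.card_subtype_compl]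
  have := Fintype.card_subtype_le p
  omega

theorem Nat.card_lt_add_card_eq_add_card_gt {α β : Type*} [Finite α] [LinearOrder β]
    (f : α → β) (c : β) :
    Nat.card {a // f a < c} + Nat.card {a // f a = c} + Nat.card {a // c < f a} = Nat.card α := by
  have := Fintype.ofFinite α
  classical
  have hdisj : Disjoint (fun a => f a < c) (fun a => f a = c) :=
    Pi.disjoint_iff.2 fun a => Prop.disjoint_iff.2 fun h => h.1.ne h.2
  rw [← Nat.card_subtype_add_card_subtype_not fun a => c < f a]
  simp only [Nat.card_eq_fintype_card, not_lt, le_iff_lt_or_eq,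
    Fintype.card_subtype_or_disjoint _ _ hdisj]
  omega

theorem Module.Basis.finrank_span_image {R M ι : Type*} [Ring R] [Nontrivial R]
    [StrongRankCondition R] [AddCommGroup M] [Module R M] [Finite ι] (b : Basis ι R M) (s : Set ι) :
    finrank R (span R (b '' s)) = Nat.card s := by
  have := Fintype.ofFinite s
  rw [Set.image_eq_range, Nat.card_eq_fintype_card]
  exact finrank_span_eq_card (b.linearIndependent.comp _ Subtype.val_injective)

namespace LinearMap

variable {𝕜 V ι ι' : Type*} [RCLike 𝕜] [AddCommGroup V] [Module 𝕜 V] [Fintype ι] [Fintype ι']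
  (B : V →ₗ[𝕜] V →ₗ⋆[𝕜] 𝕜)

theorem re_apply_self_eq_sum (b : Basis ι 𝕜 V) (hob : ∀ i j, i ≠ j → B (b i) (b j) = 0)
    (x : V) : re (B x x) = ∑ i, ‖b.repr x i‖ ^ 2 * re (B (b i) (b i)) := by
  have hright : ∀ i, B (b i) x = starRingEnd 𝕜 (b.repr x i) * B (b i) (b i) := by
    intro i
    rw [← b.sum_repr x, map_sum, Finset.sum_eq_single i (fun j _ hj => by
      rw [map_smulₛₗ, hob i j (Ne.symm hj), smul_zero]) (by simp), map_smulₛₗ, smul_eq_mul,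
      b.sum_repr]
  have hsum : B x x = ∑ i, (‖b.repr x i‖ ^ 2 : ℝ) * B (b i) (b i) := calc
    B x x = B (∑ i, b.repr x i • b i) x := by rw [b.sum_repr]
    _ = ∑ i, b.repr x i * B (b i) x := by
      simp only [map_sum, map_smul, sum_apply, smul_apply, smul_eq_mul]
    _ = _ := Finset.sum_congr rfl fun i _ => by rw [hright i, ← mul_assoc, mul_conj, ofReal_pow]
  simp only [hsum, map_sum, re_ofReal_mul]

variable {B}

theorem re_apply_self_pos_of_mem_span {b : Basis ι 𝕜 V}
    (hob : ∀ i j, i ≠ j → B (b i) (b j) = 0) {s : Set ι} (hs : ∀ i ∈ s, 0 < re (B (b i) (b i)))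
    {x : V} (hx : x ∈ span 𝕜 (b '' s)) (hx0 : x ≠ 0) : 0 < re (B x x) := by
  have hsupp : ∀ i, b.repr x i ≠ 0 → i ∈ s := fun i hi =>
    b.mem_span_image.mp hx (Finsupp.mem_support_iff.mpr hi)
  obtain ⟨i₀, hi₀⟩ : ∃ i, b.repr x i ≠ 0 := by
    by_contra! h
    exact hx0 (b.repr.injective (Finsupp.ext h |>.trans (map_zero b.repr).symm))
  rw [re_apply_self_eq_sum B b hob]
  refine Finset.sum_pos' (fun i _ => ?_) ⟨i₀, Finset.mem_univ _, ?_⟩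
  · by_cases hi : b.repr x i = 0
    · simp [hi]
    · exact mul_nonneg (sq_nonneg _) (hs i (hsupp i hi)).le
  · exact mul_pos (pow_pos (norm_pos_iff.mpr hi₀) 2) (hs i₀ (hsupp i₀ hi₀))

theorem re_apply_self_nonpos_of_mem_span {b : Basis ι 𝕜 V}
    (hob : ∀ i j, i ≠ j → B (b i) (b j) = 0) {s : Set ι} (hs : ∀ i ∈ s, re (B (b i) (b i)) ≤ 0)
    {x : V} (hx : x ∈ span 𝕜 (b '' s)) : re (B x x) ≤ 0 := by
  rw [re_apply_self_eq_sum B b hob]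
  refine Finset.sum_nonpos fun i _ => ?_
  by_cases hi : b.repr x i = 0
  · simp [hi]
  · exact mul_nonpos_of_nonneg_of_nonpos (sq_nonneg _)
      (hs i (b.mem_span_image.mp hx (Finsupp.mem_support_iff.mpr hi)))

variable [FiniteDimensional 𝕜 V] {b : Basis ι 𝕜 V} {b' : Basis ι' 𝕜 V}

theorem card_re_apply_self_pos_add_card_nonpos_le (hob : ∀ i j, i ≠ j → B (b i) (b j) = 0)
    (hob' : ∀ i j, i ≠ j → B (b' i) (b' j) = 0) :
    Nat.card {i // 0 < re (B (b i) (b i))} + Nat.card {i // re (B (b' i) (b' i)) ≤ 0} ≤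
      finrank 𝕜 V := by
  have hdisj : Disjoint (span 𝕜 (b '' {i | 0 < re (B (b i) (b i))}))
      (span 𝕜 (b' '' {i | re (B (b' i) (b' i)) ≤ 0})) :=
    disjoint_def.2 fun x hxP hxN => by_contra fun hx0 =>
      (re_apply_self_pos_of_mem_span hob (fun _ h => h) hxP hx0).not_ge
        (re_apply_self_nonpos_of_mem_span hob' (fun _ h => h) hxN)
  have := finrank_add_finrank_le_of_disjoint hdisj
  rwa [b.finrank_span_image, b'.finrank_span_image] at this

theorem card_re_apply_self_pos_eq (hob : ∀ i j, i ≠ j → B (b i) (b j) = 0)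
    (hob' : ∀ i j, i ≠ j → B (b' i) (b' j) = 0) :
    Nat.card {i // 0 < re (B (b i) (b i))} = Nat.card {i // 0 < re (B (b' i) (b' i))} := by
  have h := card_re_apply_self_pos_add_card_nonpos_le hob hob'
  have h' := card_re_apply_self_pos_add_card_nonpos_le hob' hob
  have hc := Nat.card_subtype_add_card_subtype_not fun i => 0 < re (B (b i) (b i))
  have hc' := Nat.card_subtype_add_card_subtype_not fun i => 0 < re (B (b' i) (b' i))
  simp only [not_lt] at hc hc'
  rw [← finrank_eq_nat_card_basis b] at hc
  rw [← finrank_eq_nat_card_basis b'] at hc'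
  omega

theorem card_re_apply_self_neg_eq (hob : ∀ i j, i ≠ j → B (b i) (b j) = 0)
    (hob' : ∀ i j, i ≠ j → B (b' i) (b' j) = 0) :
    Nat.card {i // re (B (b i) (b i)) < 0} = Nat.card {i // re (B (b' i) (b' i)) < 0} := by
  simpa using card_re_apply_self_pos_eq (B := -B) (b := b) (b' := b')
    (fun i j h => by simp [hob i j h]) (fun i j h => by simp [hob' i j h])

theorem card_re_apply_self_eq_zero_eq (hob : ∀ i j, i ≠ j → B (b i) (b j) = 0)
    (hob' : ∀ i j, i ≠ j → B (b' i) (b' j) = 0) :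
    Nat.card {i // re (B (b i) (b i)) = 0} = Nat.card {i // re (B (b' i) (b' i)) = 0} := by
  have h := Nat.card_lt_add_card_eq_add_card_gt (fun i => re (B (b i) (b i))) 0
  have h' := Nat.card_lt_add_card_eq_add_card_gt (fun i => re (B (b' i) (b' i))) 0
  rw [← finrank_eq_nat_card_basis b] at h
  rw [← finrank_eq_nat_card_basis b'] at h'
  have := card_re_apply_self_pos_eq hob hob'
  have := card_re_apply_self_neg_eq hob hob'
  omega

end LinearMap

theorem stmt_9_general {𝕜 : Type*} [RCLike 𝕜] {V : Type*} [AddCommGroup V] [Module 𝕜 V]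
    [FiniteDimensional 𝕜 V] (B : V →ₗ[𝕜] V →ₗ⋆[𝕜] 𝕜)
    {ι ι' : Type*} [Fintype ι] [Fintype ι'] (b : Module.Basis ι 𝕜 V) (b' : Module.Basis ι' 𝕜 V)
    (hob : ∀ i j, i ≠ j → B (b i) (b j) = 0)
    (hvb : ∀ i, B (b i) (b i) = -1 ∨ B (b i) (b i) = 0 ∨ B (b i) (b i) = 1)
    (hob' : ∀ i j, i ≠ j → B (b' i) (b' j) = 0)
    (hvb' : ∀ i, B (b' i) (b' i) = -1 ∨ B (b' i) (b' i) = 0 ∨ B (b' i) (b' i) = 1) :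
    Nat.card {i // B (b i) (b i) = -1} = Nat.card {i // B (b' i) (b' i) = -1} ∧
    Nat.card {i // B (b i) (b i) = 0} = Nat.card {i // B (b' i) (b' i) = 0} ∧
    Nat.card {i // B (b i) (b i) = 1} = Nat.card {i // B (b' i) (b' i) = 1} := by
  have sign_iff {z : 𝕜} (hz : z = -1 ∨ z = 0 ∨ z = 1) :
      (z = -1 ↔ re z < 0) ∧ (z = 0 ↔ re z = 0) ∧ (z = 1 ↔ 0 < re z) := by
    rcases hz with rfl | rfl | rfl <;> norm_num
  refine ⟨?_, ?_, ?_⟩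
  · rw [Nat.card_congr (Equiv.subtypeEquivRight fun i => (sign_iff (hvb i)).1),
      Nat.card_congr (Equiv.subtypeEquivRight fun i => (sign_iff (hvb' i)).1)]
    exact LinearMap.card_re_apply_self_neg_eq hob hob'
  · rw [Nat.card_congr (Equiv.subtypeEquivRight fun i => (sign_iff (hvb i)).2.1),
      Nat.card_congr (Equiv.subtypeEquivRight fun i => (sign_iff (hvb' i)).2.1)]
    exact LinearMap.card_re_apply_self_eq_zero_eq hob hob'
  · rw [Nat.card_congr (Equiv.subtypeEquivRight fun i => (sign_iff (hvb i)).2.2),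
      Nat.card_congr (Equiv.subtypeEquivRight fun i => (sign_iff (hvb' i)).2.2)]
    exact LinearMap.card_re_apply_self_pos_eq hob hob'

/-- Sylvester's law of inertia for hermitian forms: any two orthonormal bases of
a finite-dimensional space over ℝ or ℂ with a hermitian form have the same
number of basis vectors with self-product `-1`, `0`, and `+1`. -/
theorem stmt_9 {𝕜 : Type*} [RCLike 𝕜] {V : Type*} [AddCommGroup V] [Module 𝕜 V]
    [FiniteDimensional 𝕜 V] (B : V →ₗ[𝕜] V →ₗ⋆[𝕜] 𝕜)
    (hB : ∀ x y, B x y = starRingEnd 𝕜 (B y x))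
    {ι ι' : Type*} [Fintype ι] [Fintype ι'] (b : Module.Basis ι 𝕜 V) (b' : Module.Basis ι' 𝕜 V)
    (hob : ∀ i j, i ≠ j → B (b i) (b j) = 0)
    (hvb : ∀ i, B (b i) (b i) = -1 ∨ B (b i) (b i) = 0 ∨ B (b i) (b i) = 1)
    (hob' : ∀ i j, i ≠ j → B (b' i) (b' j) = 0)
    (hvb' : ∀ i, B (b' i) (b' i) = -1 ∨ B (b' i) (b' i) = 0 ∨ B (b' i) (b' i) = 1) :
    Nat.card {i // B (b i) (b i) = -1} = Nat.card {i // B (b' i) (b' i) = -1} ∧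
    Nat.card {i // B (b i) (b i) = 0} = Nat.card {i // B (b' i) (b' i) = 0} ∧
    Nat.card {i // B (b i) (b i) = 1} = Nat.card {i // B (b' i) (b' i) = 1} :=
  stmt_9_general B b b' hob hvb hob' hvb'
end

section
/- (Triangle inequality in terms of tance, real hyperbolic case) Let r₁, r₂, r₃ be real numbers with rᵢ ≥ 1 for all i, satisfying r₁² + r₂² + r₃² ≤ 2 r₁ r₂ r₃ + 1. Then arccosh r₁ ≤ arccosh r₂ + arccosh r₃ (and by symmetry all three triangle inequalities hold). -/
/-!
With `a = arccosh r₂` and `b = arccosh r₃`, the addition formula gives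
`cosh (a + b) = r₂ r₃ + √((r₂² - 1)(r₃² - 1))`. The hypothesis is a rearrangement of
`(r₁ - r₂ r₃)² ≤ (r₂² - 1)(r₃² - 1)`, so `r₁ ≤ cosh (a + b)`, and `arccosh` is monotone.
-/

noncomputable def arccosh (x : ℝ) : ℝ := Real.log (x + Real.sqrt (x ^ 2 - 1))

open Real

theorem arccosh_eq_arcosh : arccosh = arcosh := rfl

theorem cosh_arcosh_add_arcosh {x y : ℝ} (hx : 1 ≤ x) (hy : 1 ≤ y) :
    cosh (arcosh x + arcosh y) = x * y + √((x ^ 2 - 1) * (y ^ 2 - 1)) := by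
  rw [cosh_add, cosh_arcosh hx, cosh_arcosh hy, sinh_arcosh hx, sinh_arcosh hy,
    sqrt_mul (by nlinarith)]

theorem le_mul_add_sqrt_of_sq_add_sq_add_sq_le {a b c : ℝ}
    (h : a ^ 2 + b ^ 2 + c ^ 2 ≤ 2 * a * b * c + 1) :
    a ≤ b * c + √((b ^ 2 - 1) * (c ^ 2 - 1)) := by
  have hsq : (a - b * c) ^ 2 ≤ (b ^ 2 - 1) * (c ^ 2 - 1) := by nlinarith
  linarith [le_abs_self (a - b * c), abs_le_sqrt hsq]

/-- The triangle inequality in terms of tance in real hyperbolic geometry: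
if `rᵢ ≥ 1` and `r₁² + r₂² + r₃² ≤ 2r₁r₂r₃ + 1`, then
`arccosh r₁ ≤ arccosh r₂ + arccosh r₃`. -/
theorem stmt_13 (r₁ r₂ r₃ : ℝ) (h1 : 1 ≤ r₁) (h2 : 1 ≤ r₂) (h3 : 1 ≤ r₃)
    (h : r₁ ^ 2 + r₂ ^ 2 + r₃ ^ 2 ≤ 2 * r₁ * r₂ * r₃ + 1) :
    arccosh r₁ ≤ arccosh r₂ + arccosh r₃ := by
  rw [arccosh_eq_arcosh]
  have hr₁ : r₁ ≤ cosh (arcosh r₂ + arcosh r₃) := by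
    rw [cosh_arcosh_add_arcosh h2 h3]
    exact le_mul_add_sqrt_of_sq_add_sq_add_sq_le h
  calc arcosh r₁ ≤ arcosh (cosh (arcosh r₂ + arcosh r₃)) :=
        (arcosh_le_arcosh (by linarith) (cosh_pos _)).2 hr₁
    _ = arcosh r₂ + arcosh r₃ := arcosh_cosh (add_nonneg (arcosh_nonneg h2) (arcosh_nonneg h3))
end

section
/- Let p₁, p₂, p₃ be vectors in ℝ^4 equipped with a symmetric bilinear form of signature (-,+,+,+), each with ⟨pᵢ,pᵢ⟩ = -1 and with rᵢ := -⟨pᵢ,p_{i+1}⟩ > 0 (indices mod 3). Then rᵢ² ≥ 1 for each i and r₁² + r₂² + r₃² ≤ 2 r₁ r₂ r₃ + 1. -/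
/-!
In an orthogonal basis of signature `(1, n)`, Cauchy–Schwarz for the spacelike coordinates shows
that the form is positive semidefinite on the orthogonal complement of any timelike vector `p`.
The map `q ↦ ⟨p,p⟩ q - ⟨p,q⟩ p` projects into that complement, and Cauchy–Schwarz there says that
the Gram determinants of `(p, q)` and of `(p, q, s)` are `≤ 0`. For `pᵢ` with `⟨pᵢ,pᵢ⟩ = -1` these
are `rᵢ² ≥ 1` and `r₁² + r₂² + r₃² ≤ 2 r₁ r₂ r₃ + 1`.
-/

open Finset Module

namespace LinearMap.BilinForm

section OrthogonalBasis

variable {R M ι : Type*} [CommSemiring R] [AddCommMonoid M] [Module R M] [Fintype ι]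
  {B : LinearMap.BilinForm R M}

theorem apply_eq_sum_of_iIsOrtho (b : Basis ι R M) (hb : B.iIsOrtho b) (x y : M) :
    B x y = ∑ i, b.repr x i * b.repr y i * B (b i) (b i) := by
  classical
  conv_lhs => rw [← b.sum_repr x, ← b.sum_repr y]
  simp only [map_sum, map_smul, LinearMap.sum_apply, LinearMap.smul_apply, smul_eq_mul]
  refine sum_congr rfl fun i _ => ?_
  rw [sum_eq_single i (fun j _ hji => by rw [hb hji, mul_zero]) (by simp)]
  ring

theorem isSymm_of_iIsOrtho (b : Basis ι R M) (hb : B.iIsOrtho b) : B.IsSymm :=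
  ⟨fun x y => by
    rw [apply_eq_sum_of_iIsOrtho b hb x y, apply_eq_sum_of_iIsOrtho b hb y x]
    exact sum_congr rfl fun i _ => by ring⟩

end OrthogonalBasis

variable {V ι : Type*} [AddCommGroup V] [Module ℝ V] {B : LinearMap.BilinForm ℝ V}

section LorentzianBasis

variable [Fintype ι] [DecidableEq ι] (b : Basis ι ℝ V) (hb : B.iIsOrtho b) {i₀ : ι}
  (h₀ : B (b i₀) (b i₀) = -1) (h₁ : ∀ i, i ≠ i₀ → B (b i) (b i) = 1)
include hb h₀ h₁

theorem apply_eq_of_lorentzian_basis (x y : V) :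
    B x y = -(b.repr x i₀ * b.repr y i₀) + ∑ i ∈ univ.erase i₀, b.repr x i * b.repr y i := by
  rw [apply_eq_sum_of_iIsOrtho b hb, ← add_sum_erase _ _ (mem_univ i₀), h₀]
  congr 1
  · ring
  · exact sum_congr rfl fun i hi => by rw [h₁ i (ne_of_mem_erase hi), mul_one]

theorem nonneg_of_apply_eq_zero_of_lorentzian_basis {p v : V} (hp : B p p < 0) (hv : B p v = 0) :
    0 ≤ B v v := by
  rw [apply_eq_of_lorentzian_basis b hb h₀ h₁] at hp hv ⊢
  have cs := sum_mul_sq_le_sq_mul_sq (univ.erase i₀) (b.repr p) (b.repr v)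
  have hX := sum_nonneg fun i (_ : i ∈ univ.erase i₀) => sq_nonneg (b.repr p i)
  have hY := sum_nonneg fun i (_ : i ∈ univ.erase i₀) => sq_nonneg (b.repr v i)
  simp only [← sq] at hp hv cs ⊢
  set x₀ := b.repr p i₀
  set y₀ := b.repr v i₀
  set X := ∑ i ∈ univ.erase i₀, b.repr p i ^ 2
  set Y := ∑ i ∈ univ.erase i₀, b.repr v i ^ 2
  have hS : ∑ i ∈ univ.erase i₀, b.repr p i * b.repr v i = x₀ * y₀ := by linarith
  rw [hS] at cs
  by_contra! hneg
  nlinarith [mul_pos (by linarith : 0 < x₀ ^ 2 - X) (by nlinarith : 0 < y₀ ^ 2),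
    mul_nonneg hX (by linarith : 0 ≤ y₀ ^ 2 - Y)]

end LorentzianBasis

section Timelike

theorem apply_sub_smul_eq_zero (p q : V) : B p (B p p • q - B p q • p) = 0 := by
  simp [mul_comm]

theorem apply_sub_smul_sub_smul (hB : B.IsSymm) (p q s : V) :
    B (B p p • q - B p q • p) (B p p • s - B p s • p)
      = B p p * (B p p * B q s - B p q * B p s) := by
  simp only [map_sub, map_smul, LinearMap.sub_apply, LinearMap.smul_apply, smul_eq_mul,
    hB.eq q p]
  ring

variable (hB : B.IsSymm) {p : V} (hp : B p p < 0) (hpos : ∀ v, B p v = 0 → 0 ≤ B v v)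
include hB hpos

theorem sq_apply_le_mul_of_apply_eq_zero {u w : V} (hu : B p u = 0) (hw : B p w = 0) :
    B u w ^ 2 ≤ B u u * B w w := by
  have hquad : ∀ t : ℝ, 0 ≤ B w w * (t * t) + 2 * B u w * t + B u u := fun t => by
    have h := hpos (t • w + u) (by simp [hu, hw])
    simp only [map_add, map_smul, LinearMap.add_apply, LinearMap.smul_apply, smul_eq_mul,
      hB.eq w u] at h
    linarith
  have := discrim_le_zero hquad
  rw [discrim] at this
  linarith

include hp

theorem mul_apply_le_sq (q : V) : B p p * B q q ≤ B p q ^ 2 := by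
  have h := hpos _ (apply_sub_smul_eq_zero p q)
  rw [apply_sub_smul_sub_smul hB] at h
  nlinarith [nonpos_of_mul_nonneg_right h hp]

theorem gram_det_nonpos (q s : V) :
    B p p * B q q * B s s + 2 * B p q * B q s * B s p
      - B p p * B q s ^ 2 - B q q * B s p ^ 2 - B s s * B p q ^ 2 ≤ 0 := by
  have cs := sq_apply_le_mul_of_apply_eq_zero hB hpos
    (apply_sub_smul_eq_zero p q) (apply_sub_smul_eq_zero p s)
  rw [apply_sub_smul_sub_smul hB, apply_sub_smul_sub_smul hB, apply_sub_smul_sub_smul hB] at cs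
  rw [hB.eq s p]
  -- Sylvester's identity: `(⟨p,p⟩⟨q,q⟩ - ⟨p,q⟩²)(⟨p,p⟩⟨s,s⟩ - ⟨p,s⟩²) - (⟨p,p⟩⟨q,s⟩ - ⟨p,q⟩⟨p,s⟩)²`
  -- equals `⟨p,p⟩ * det`, so `cs` says `⟨p,p⟩³ * det ≥ 0`.
  refine nonpos_of_mul_nonneg_right (a := B p p ^ 3) ?_ (Odd.pow_neg (by decide) hp)
  linear_combination cs

end Timelike

end LinearMap.BilinForm

open LinearMap.BilinForm

theorem stmt_14_general (B : LinearMap.BilinForm ℝ (Fin 4 → ℝ))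
    (b : Module.Basis (Fin 4) ℝ (Fin 4 → ℝ))
    (horth : ∀ i j, i ≠ j → B (b i) (b j) = 0)
    (hb0 : B (b 0) (b 0) = -1) (hb1 : B (b 1) (b 1) = 1)
    (hb2 : B (b 2) (b 2) = 1) (hb3 : B (b 3) (b 3) = 1)
    (p₁ p₂ p₃ : Fin 4 → ℝ)
    (hp₁ : B p₁ p₁ = -1) (hp₂ : B p₂ p₂ = -1) (hp₃ : B p₃ p₃ = -1)
    (r₁ r₂ r₃ : ℝ)
    (hr₁ : r₁ = -B p₁ p₂) (hr₂ : r₂ = -B p₂ p₃) (hr₃ : r₃ = -B p₃ p₁) :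
    (1 ≤ r₁ ^ 2 ∧ 1 ≤ r₂ ^ 2 ∧ 1 ≤ r₃ ^ 2) ∧
      r₁ ^ 2 + r₂ ^ 2 + r₃ ^ 2 ≤ 2 * r₁ * r₂ * r₃ + 1 := by
  have hb : B.iIsOrtho b := horth
  have hB := isSymm_of_iIsOrtho b hb
  have hspace : ∀ i, i ≠ 0 → B (b i) (b i) = 1 := by
    intro i hi
    fin_cases i <;> simp_all
  have hpos : ∀ p, B p p < 0 → ∀ v, B p v = 0 → 0 ≤ B v v := fun p hp _ hv =>
    nonneg_of_apply_eq_zero_of_lorentzian_basis b hb hb0 hspace hp hv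
  have hneg₁ : B p₁ p₁ < 0 := by linarith
  have hneg₂ : B p₂ p₂ < 0 := by linarith
  have hneg₃ : B p₃ p₃ < 0 := by linarith
  subst hr₁ hr₂ hr₃
  refine ⟨⟨?_, ?_, ?_⟩, ?_⟩
  · simpa [hp₁, hp₂] using mul_apply_le_sq hB hneg₁ (hpos _ hneg₁) p₂
  · simpa [hp₂, hp₃] using mul_apply_le_sq hB hneg₂ (hpos _ hneg₂) p₃
  · simpa [hp₃, hp₁] using mul_apply_le_sq hB hneg₃ (hpos _ hneg₃) p₁
  · have := gram_det_nonpos hB hneg₁ (hpos _ hneg₁) p₂ p₃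
    rw [hp₁, hp₂, hp₃] at this
    linarith

/-- For three normalized negative vectors in `ℝ⁴` with a symmetric bilinear form
of signature `(-,+,+,+)`, the quantities `rᵢ = -⟨pᵢ, p_{i+1}⟩ > 0` satisfy
`rᵢ² ≥ 1` and `r₁² + r₂² + r₃² ≤ 2r₁r₂r₃ + 1`. -/
theorem stmt_14 (B : LinearMap.BilinForm ℝ (Fin 4 → ℝ))
    (hsymm : ∀ x y, B x y = B y x)
    (b : Module.Basis (Fin 4) ℝ (Fin 4 → ℝ))
    (horth : ∀ i j, i ≠ j → B (b i) (b j) = 0)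
    (hb0 : B (b 0) (b 0) = -1) (hb1 : B (b 1) (b 1) = 1)
    (hb2 : B (b 2) (b 2) = 1) (hb3 : B (b 3) (b 3) = 1)
    (p₁ p₂ p₃ : Fin 4 → ℝ)
    (hp₁ : B p₁ p₁ = -1) (hp₂ : B p₂ p₂ = -1) (hp₃ : B p₃ p₃ = -1)
    (r₁ r₂ r₃ : ℝ)
    (hr₁ : r₁ = -B p₁ p₂) (hr₂ : r₂ = -B p₂ p₃) (hr₃ : r₃ = -B p₃ p₁)
    (hr₁pos : 0 < r₁) (hr₂pos : 0 < r₂) (hr₃pos : 0 < r₃) :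
    (1 ≤ r₁ ^ 2 ∧ 1 ≤ r₂ ^ 2 ∧ 1 ≤ r₃ ^ 2) ∧
      r₁ ^ 2 + r₂ ^ 2 + r₃ ^ 2 ≤ 2 * r₁ * r₂ * r₃ + 1 :=
  stmt_14_general B b horth hb0 hb1 hb2 hb3 p₁ p₂ p₃ hp₁ hp₂ hp₃ r₁ r₂ r₃ hr₁ hr₂ hr₃
end
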